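/- arXiv:1309.1712 — 2 statements merged into one kernel-verified Lean document; each statement's English description precedes it below -/
import Mathlib

section
/- For every h₀ ∈ L^∞(ℝ^d × ℝ) and every sequence (ε_m) of positive real numbers with ε_m → 0, there exists a subsequence (still denoted ε_m) such that for almost every y ∈ ℝ^d one has ∫_K |h₀(y + √(ε_m)·x̄ + ε_m·x̃, λ) − h₀(y, λ)| d(x,λ) → 0 as m → ∞ for every compact set K ⊆ ℝ^d × ℝ, where for x = (x_1,…,x_d) ∈ ℝ^d one writes x̄ = (x_1,…,x_k,0,…,0) and x̃ = (0,…,0,x_{k+1},…,x_d). -/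
/-!
Fix continuous, positive, integrable weights `w` on `ℝ^d` and `W` on `ℝ^d × ℝ`. Continuity of
translation in `L¹`, applied to `w · h₀(·, λ)` and to `w`, shows that for each `(x, λ)` the weighted
defect `∫ w(y) |h₀(y + v_m(x), λ) - h₀(y, λ)| dy` tends to `0`, where `v_m(x) = √ε_m x̄ + ε_m x̃`.
By dominated convergence and Fubini, `Φ_m(y) := ∫ W(x, λ) |h₀(y + v_m(x), λ) - h₀(y, λ)| d(x, λ)`
then tends to `0` in `L¹(w dy)`, so a subsequence converges for a.e. `y`. On a compact set `K`
the weight `W` is bounded below by a positive constant, so `∫_K |…|` is controlled by `Φ_m(y)`.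
-/

open MeasureTheory Filter Topology Function

theorem exists_strictMono_ae_tendsto_zero_of_tendsto_integral {α : Type*} [MeasurableSpace α]
    {μ : Measure α} {f : ℕ → α → ℝ} (hf : ∀ n, Integrable (f n) μ) (hf0 : ∀ n, 0 ≤ᵐ[μ] f n)
    (h : Tendsto (fun n => ∫ x, f n x ∂μ) atTop (𝓝 0)) :
    ∃ ψ : ℕ → ℕ, StrictMono ψ ∧ ∀ᵐ x ∂μ, Tendsto (fun n => f (ψ n) x) atTop (𝓝 0) := by
  have hnorm : ∀ n, eLpNorm (f n - 0) 1 μ = ENNReal.ofReal (∫ x, f n x ∂μ) := fun n => by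
    rw [sub_zero, eLpNorm_one_eq_lintegral_enorm,
      ofReal_integral_eq_lintegral_ofReal (hf n) (hf0 n)]
    exact lintegral_congr_ae ((hf0 n).mono fun x hx => Real.enorm_eq_ofReal hx)
  have hL1 : Tendsto (fun n => eLpNorm (f n - 0) 1 μ) atTop (𝓝 0) := by
    simpa only [hnorm, ENNReal.ofReal_zero] using ENNReal.tendsto_ofReal h
  exact (tendstoInMeasure_of_tendsto_eLpNorm one_ne_zero (fun n => (hf n).1)
    aestronglyMeasurable_const hL1).exists_seq_tendsto_ae

theorem exists_continuous_pos_integrable {E : Type*} [NormedAddCommGroup E] [NormedSpace ℝ E]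
    [FiniteDimensional ℝ E] [MeasurableSpace E] [BorelSpace E] (μ : Measure E)
    [μ.IsAddHaarMeasure] :
    ∃ w : E → ℝ, Continuous w ∧ (∀ x, 0 < w x) ∧ Integrable w μ :=
  ⟨fun x => (1 + ‖x‖) ^ (-(Module.finrank ℝ E + 1 : ℝ)),
    (by fun_prop : Continuous fun x : E => 1 + ‖x‖).rpow_const fun x => .inl (by positivity),
    fun x => by positivity, integrable_one_add_norm (by linarith)⟩

theorem setIntegral_le_inv_mul_integral_mul {α : Type*} [MeasurableSpace α] {ν : Measure α}
    {K : Set α} (hK : MeasurableSet K) {f W : α → ℝ} {c : ℝ} (hc : 0 < c)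
    (hcW : ∀ p ∈ K, c ≤ W p) (hW0 : ∀ p, 0 ≤ W p) (hf0 : ∀ p, 0 ≤ f p)
    (hfK : IntegrableOn f K ν) (hWf : Integrable (fun p => W p * f p) ν) :
    ∫ p in K, f p ∂ν ≤ c⁻¹ * ∫ p, W p * f p ∂ν := by
  rw [← integral_const_mul]
  refine (setIntegral_mono_on hfK (hWf.const_mul _).integrableOn hK fun p hp => ?_).trans
    (setIntegral_le_integral (hWf.const_mul _) (.of_forall fun p => ?_))
  · rw [le_inv_mul_iff₀ hc]
    exact mul_le_mul_of_nonneg_right (hcW p hp) (hf0 p)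
  · have := hW0 p; have := hf0 p; positivity

section Translation

variable {G : Type*} [TopologicalSpace G] [AddGroup G] [IsTopologicalAddGroup G]
  [MeasurableSpace G] [BorelSpace G] {μ : Measure G}
  [μ.IsAddRightInvariant] [μ.InnerRegularCompactLTTop] [IsLocallyFiniteMeasure μ]

theorem tendsto_integral_abs_sub_comp_add_right {f : G → ℝ} (hf : Integrable f μ) :
    Tendsto (fun v => ∫ y, |f (y + v) - f y| ∂μ) (𝓝 0) (𝓝 0) := by
  have hpres : ∀ v : G, MeasurePreserving (· + v) μ μ := measurePreserving_add_right μ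
  let τ : G → C(G, G) := fun v => ⟨(· + v), by fun_prop⟩
  have hτ : Continuous τ :=
    ContinuousMap.continuous_of_continuous_uncurry _ (continuous_snd.add continuous_fst)
  have hcomp : ∀ v, (Lp.compMeasurePreserving (τ v) (hpres v) (hf.toL1 f) : G → ℝ)
      =ᵐ[μ] fun y => f (y + v) := fun v =>
    (Lp.coeFn_compMeasurePreserving _ (hpres v)).trans
      ((hpres v).quasiMeasurePreserving.ae_eq_comp hf.coeFn_toL1)
  have hLp := Filter.Tendsto.compMeasurePreservingLp tendsto_const_nhds (hτ.tendsto 0) hpres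
    (hpres 0) ENNReal.one_ne_top (f := fun _ => hf.toL1 f)
  rw [tendsto_iff_norm_sub_tendsto_zero] at hLp
  refine hLp.congr fun v => ?_
  rw [L1.norm_eq_integral_norm]
  refine integral_congr_ae ?_
  filter_upwards [Lp.coeFn_sub (Lp.compMeasurePreserving (τ v) (hpres v) (hf.toL1 f))
    (Lp.compMeasurePreserving (τ 0) (hpres 0) (hf.toL1 f)), hcomp v, hcomp 0] with y h1 h2 h3
  simp only [h1, Pi.sub_apply, h2, h3, add_zero, Real.norm_eq_abs]

theorem tendsto_integral_mul_abs_sub_comp_add_right {w f : G → ℝ} {C : ℝ}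
    (hw : Integrable w μ) (hw0 : ∀ y, 0 ≤ w y) (hf : AEStronglyMeasurable f μ)
    (hfC : ∀ y, |f y| ≤ C) :
    Tendsto (fun v => ∫ y, w y * |f (y + v) - f y| ∂μ) (𝓝 0) (𝓝 0) := by
  have hwf : Integrable (fun y => w y * f y) μ :=
    hw.mul_bdd hf (.of_forall fun y => (Real.norm_eq_abs _).trans_le (hfC y))
  -- `w` is moved inside the translate, at the price of the translation defect of `w` itself
  have hle : ∀ v y, w y * |f (y + v) - f y|
      ≤ |w (y + v) * f (y + v) - w y * f y| + C * |w (y + v) - w y| := fun v y =>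
    calc w y * |f (y + v) - f y|
        = |(w (y + v) * f (y + v) - w y * f y) - (w (y + v) - w y) * f (y + v)| := by
          rw [← abs_of_nonneg (hw0 y), ← abs_mul, abs_of_nonneg (hw0 y)]; ring_nf
      _ ≤ |w (y + v) * f (y + v) - w y * f y| + |w (y + v) - w y| * C := by
          grw [abs_sub, abs_mul, hfC]
      _ = _ := by ring
  have hbound := (tendsto_integral_abs_sub_comp_add_right hwf).add
    ((tendsto_integral_abs_sub_comp_add_right hw).const_mul C)
  rw [mul_zero, add_zero] at hbound
  refine squeeze_zero (fun v => integral_nonneg fun y => mul_nonneg (hw0 y) (abs_nonneg _))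
    (fun v => ?_) hbound
  have hint : ∀ g : G → ℝ, Integrable g μ → Integrable (fun y => |g (y + v) - g y|) μ :=
    fun g hg => ((hg.comp_add_right v).sub hg).abs
  rw [← integral_const_mul, ← integral_add (hint _ hwf) ((hint _ hw).const_mul C)]
  exact integral_mono_of_nonneg (.of_forall fun y => mul_nonneg (hw0 y) (abs_nonneg _))
    ((hint _ hwf).add ((hint _ hw).const_mul C)) (.of_forall (hle v))

end Translation

section Product

variable {G P : Type*} [NormedAddCommGroup G] [MeasurableSpace G] [BorelSpace G]
  [SecondCountableTopology G] {μ : Measure G} [MeasurableSpace P] {ν : Measure P}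

theorem integrable_weight_mul_abs_sub_comp_add {h : G → P → ℝ} (hh : Measurable (uncurry h))
    {C : ℝ} (hC : ∀ y p, |h y p| ≤ C) {v : P → G} (hv : Measurable v)
    {w : G → ℝ} (hw : Integrable w μ) (hw0 : ∀ y, 0 ≤ w y)
    {W : P → ℝ} (hW : Integrable W ν) (hW0 : ∀ p, 0 ≤ W p) :
    Integrable (fun q : G × P => W q.2 * (w q.1 * |h (q.1 + v q.2) q.2 - h q.1 q.2|))
      (μ.prod ν) := by
  have hmeas : Measurable fun q : G × P => |h (q.1 + v q.2) q.2 - h q.1 q.2| := by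
    fun_prop
  refine ((hw.mul_prod hW).mul_const (C + C)).mono'
    (hW.1.comp_snd.mul (hw.1.comp_fst.mul hmeas.aestronglyMeasurable)) (.of_forall fun q => ?_)
  rw [Real.norm_of_nonneg (by have := hW0 q.2; have := hw0 q.1; positivity)]
  calc W q.2 * (w q.1 * |h (q.1 + v q.2) q.2 - h q.1 q.2|) ≤ W q.2 * (w q.1 * (C + C)) := by
        gcongr
        exacts [hW0 _, hw0 _, (abs_sub _ _).trans (add_le_add (hC _ _) (hC _ _))]
    _ = _ := by ring

theorem tendsto_integral_weight_mul_abs_sub_comp_add [μ.IsAddRightInvariant]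
    [μ.InnerRegularCompactLTTop] [IsLocallyFiniteMeasure μ] [SFinite ν] {h : G → P → ℝ}
    (hh : Measurable (uncurry h)) {C : ℝ} (hC : ∀ y p, |h y p| ≤ C) {v : ℕ → P → G}
    (hv : ∀ m, Measurable (v m)) (hv0 : ∀ p, Tendsto (fun m => v m p) atTop (𝓝 0))
    {w : G → ℝ} (hw : Integrable w μ) (hw0 : ∀ y, 0 ≤ w y)
    {W : P → ℝ} (hW : Integrable W ν) (hW0 : ∀ p, 0 ≤ W p) :
    Tendsto (fun m => ∫ q, W q.2 * (w q.1 * |h (q.1 + v m q.2) q.2 - h q.1 q.2|) ∂(μ.prod ν))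
      atTop (𝓝 0) := by
  have hint := fun m => integrable_weight_mul_abs_sub_comp_add hh hC (hv m) hw hw0 hW hW0
  simp_rw [integral_prod_symm _ (hint _)]
  rw [← integral_zero P ℝ]
  refine tendsto_integral_of_dominated_convergence (fun p => W p * ((∫ y, w y ∂μ) * (C + C)))
    (fun m => (hint m).integral_prod_right.1) (hW.mul_const _) (fun m => .of_forall fun p => ?_)
    (.of_forall fun p => ?_)
  · rw [← integral_mul_const, ← integral_const_mul]
    refine norm_integral_le_of_norm_le ((hw.mul_const _).const_mul _) (.of_forall fun y => ?_)
    rw [Real.norm_of_nonneg (by have := hW0 p; have := hw0 y; positivity)]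
    gcongr
    exacts [hW0 _, hw0 _, (abs_sub _ _).trans (add_le_add (hC _ _) (hC _ _))]
  · simp_rw [integral_const_mul]
    simpa using ((tendsto_integral_mul_abs_sub_comp_add_right hw hw0
      (hh.comp (measurable_id.prodMk measurable_const)).aestronglyMeasurable
      (fun y => hC y p)).comp (hv0 p)).const_mul (W p)

end Product

theorem exists_strictMono_ae_tendsto_setIntegral_abs_sub_comp_add {G P : Type*}
    [NormedAddCommGroup G] [NormedSpace ℝ G] [FiniteDimensional ℝ G] [MeasurableSpace G]
    [BorelSpace G] {μ : Measure G} [μ.IsAddHaarMeasure]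
    [NormedAddCommGroup P] [NormedSpace ℝ P] [FiniteDimensional ℝ P] [MeasurableSpace P]
    [BorelSpace P] {ν : Measure P} [ν.IsAddHaarMeasure]
    {h : G → P → ℝ} (hh : Measurable (uncurry h)) {C : ℝ} (hC : ∀ y p, |h y p| ≤ C)
    {v : ℕ → P → G} (hv : ∀ m, Measurable (v m))
    (hv0 : ∀ p, Tendsto (fun m => v m p) atTop (𝓝 0)) :
    ∃ ψ : ℕ → ℕ, StrictMono ψ ∧ ∀ᵐ y ∂μ, ∀ K : Set P, IsCompact K →
      Tendsto (fun m => ∫ p in K, |h (y + v (ψ m) p) p - h y p| ∂ν) atTop (𝓝 0) := by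
  obtain ⟨w, -, hw0, hw⟩ := exists_continuous_pos_integrable μ
  obtain ⟨W, hWc, hW0, hW⟩ := exists_continuous_pos_integrable ν
  have hw0' : ∀ y, 0 ≤ w y := fun y => (hw0 y).le
  have hW0' : ∀ p, 0 ≤ W p := fun p => (hW0 p).le
  have hint := fun m => integrable_weight_mul_abs_sub_comp_add hh hC (hv m) hw hw0' hW hW0'
  obtain ⟨ψ, hψ, hae⟩ := exists_strictMono_ae_tendsto_zero_of_tendsto_integral
    (fun m => (hint m).integral_prod_left)
    (fun m => .of_forall fun y => integral_nonneg fun p => by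
      have := hW0' p; have := hw0' y; positivity)
    (by simpa only [integral_prod _ (hint _)] using
      tendsto_integral_weight_mul_abs_sub_comp_add hh hC hv hv0 hw hw0' hW hW0')
  refine ⟨ψ, hψ, ?_⟩
  filter_upwards [hae] with y hy K hK
  obtain ⟨c, hc, hcW⟩ := hK.exists_forall_le' hWc.continuousOn fun p _ => hW0 p
  have hΔ : ∀ m, Measurable fun p => |h (y + v m p) p - h y p| := fun m => by fun_prop
  have hΔC : ∀ m p, ‖|h (y + v m p) p - h y p|‖ ≤ C + C := fun m p => by
    rw [norm_abs_eq_norm, Real.norm_eq_abs]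
    exact (abs_sub _ _).trans (add_le_add (hC _ _) (hC _ _))
  have hWΔ : Tendsto (fun m => ∫ p, W p * |h (y + v (ψ m) p) p - h y p| ∂ν) atTop (𝓝 0) := by
    simpa only [mul_left_comm (W _), integral_const_mul, inv_mul_cancel_left₀ (hw0 y).ne',
      mul_zero] using hy.const_mul (w y)⁻¹
  refine squeeze_zero (fun m => setIntegral_nonneg hK.measurableSet fun p _ => abs_nonneg _)
    (fun m => setIntegral_le_inv_mul_integral_mul hK.measurableSet hc hcW hW0'
      (fun p => abs_nonneg _)
      (.of_bound hK.measure_lt_top (hΔ _).aestronglyMeasurable _ (.of_forall (hΔC _)))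
      (hW.mul_bdd (hΔ _).aestronglyMeasurable (.of_forall (hΔC _))))
    (by simpa using hWΔ.const_mul c⁻¹)

theorem stmt1_general (d k : ℕ)
    (h₀ : (Fin d → ℝ) → ℝ → ℝ)
    (hmeas : Measurable (Function.uncurry h₀))
    (hbdd : ∃ C : ℝ, ∀ (x : Fin d → ℝ) (l : ℝ), |h₀ x l| ≤ C)
    (ε : ℕ → ℝ) (hε0 : Tendsto ε atTop (nhds 0)) :
    ∃ ψ : ℕ → ℕ, StrictMono ψ ∧
      ∀ᵐ y : Fin d → ℝ, ∀ K : Set ((Fin d → ℝ) × ℝ), IsCompact K →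
        Tendsto (fun m => ∫ p in K,
            |h₀ (fun i => y i
                  + (if (i : ℕ) < k then Real.sqrt (ε (ψ m)) else ε (ψ m)) * p.1 i) p.2
              - h₀ y p.2|)
          atTop (nhds 0) := by
  obtain ⟨C, hC⟩ := hbdd
  let s : ℕ → Fin d → ℝ := fun m i => if (i : ℕ) < k then Real.sqrt (ε m) else ε m
  have hs : Tendsto s atTop (𝓝 0) := tendsto_pi_nhds.2 fun i => by
    by_cases hi : (i : ℕ) < k
    · simpa [s, hi] using hε0.sqrt
    · simpa [s, hi] using hε0
  -- `volume` on a product is `volume.prod volume` only after unfolding, which instance search skips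
  have : (volume : Measure ((Fin d → ℝ) × ℝ)).IsAddHaarMeasure :=
    Measure.prod.instIsAddHaarMeasure _ _
  obtain ⟨ψ, hψ, hae⟩ := exists_strictMono_ae_tendsto_setIntegral_abs_sub_comp_add
    (μ := volume) (ν := volume) (h := fun y (p : (Fin d → ℝ) × ℝ) => h₀ y p.2)
    (v := fun m p => s m * p.1) (by fun_prop) (fun y p => hC y p.2) (fun m => by fun_prop)
    (fun p => by simpa using hs.mul_const p.1)
  exact ⟨ψ, hψ, hae⟩

/-- for every `h₀ ∈ L^∞(ℝ^d × ℝ)` and every positive zero sequence `(ε_m)`,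
there is a subsequence such that for a.e. `y ∈ ℝ^d`,
`∫_K |h₀(y + √ε_m x̄ + ε_m x̃, λ) − h₀(y,λ)| d(x,λ) → 0` for every compact `K ⊆ ℝ^d × ℝ`,
where `x̄ = (x_1,…,x_k,0,…,0)` and `x̃ = (0,…,0,x_{k+1},…,x_d)`. -/
theorem stmt1 (d k : ℕ) (hd : 1 ≤ d) (hk1 : 1 ≤ k) (hkd : k ≤ d)
    (h₀ : (Fin d → ℝ) → ℝ → ℝ)
    (hmeas : Measurable (Function.uncurry h₀))
    (hbdd : ∃ C : ℝ, ∀ (x : Fin d → ℝ) (l : ℝ), |h₀ x l| ≤ C)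
    (ε : ℕ → ℝ) (hε : ∀ m, 0 < ε m) (hε0 : Tendsto ε atTop (nhds 0)) :
    ∃ ψ : ℕ → ℕ, StrictMono ψ ∧
      ∀ᵐ y : Fin d → ℝ, ∀ K : Set ((Fin d → ℝ) × ℝ), IsCompact K →
        Tendsto (fun m => ∫ p in K,
            |h₀ (fun i => y i
                  + (if (i : ℕ) < k then Real.sqrt (ε (ψ m)) else ε (ψ m)) * p.1 i) p.2
              - h₀ y p.2|)
          atTop (nhds 0) :=
  stmt1_general d k h₀ hmeas hbdd ε hε0
end

section
/- Let n ≥ 1 and let Φ : ℝⁿ → ℝⁿ be a bijective C² map with C² inverse. For a differentiable function g : ℝⁿ → ℝ and s ∈ {1,…,n} define the derivative in the s-th new coordinate by D̂_s g := (∂_s(g ∘ Φ^{−1})) ∘ Φ. Let F_1,…,F_n and h be C¹ functions ℝⁿ → ℝ and define F̂_s := ∑_{i=1}^n F_i · ∂_i Φ_s, where Φ_s is the s-th component of Φ. Then at every point of ℝⁿ: ∑_{i=1}^n ∂_i(F_i h) = ∑_{s=1}^n D̂_s(F̂_s h) − h · ∑_{i=1}^n ∑_{s=1}^n F_i · D̂_s(∂_i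 Φ_s). -/
/-!
Both sides are expanded with the Leibniz rule for `∂_i` and for `D̂_s`. The chain rule for
`g = (g ∘ Φ⁻¹) ∘ Φ` reads `∂_i g = ∑_s ∂_i Φ_s · D̂_s g`; it turns the terms `D̂_s F_i` and
`D̂_s h` of the right-hand side back into `∂_i F_i` and `∂_i h`, and what is left over is
exactly the term `h ∑_{i,s} F_i D̂_s(∂_i Φ_s)` in which `D̂_s` hits the Jacobian of `Φ`.
-/

noncomputable section

/-- Partial derivative in the `i`-th coordinate of `ℝⁿ`. -/
def pd {n : ℕ} (i : Fin n) (f : (Fin n → ℝ) → ℝ) (y : Fin n → ℝ) : ℝ :=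
  fderiv ℝ f y (Pi.single i 1)

/-- The derivative in the `s`-th new coordinate: `D̂_s g = (∂_s (g ∘ Φ⁻¹)) ∘ Φ`,
where `Ψ = Φ⁻¹`. -/
def Dhat {n : ℕ} (Φ Ψ : (Fin n → ℝ) → (Fin n → ℝ)) (s : Fin n)
    (g : (Fin n → ℝ) → ℝ) (y : Fin n → ℝ) : ℝ :=
  fderiv ℝ (g ∘ Ψ) (Φ y) (Pi.single s 1)

section PartialDerivative

variable {n : ℕ} {f g : (Fin n → ℝ) → ℝ} {y : Fin n → ℝ}

theorem pd_mul (i : Fin n) (hf : DifferentiableAt ℝ f y) (hg : DifferentiableAt ℝ g y) :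
    pd i (fun z => f z * g z) y = pd i f y * g y + f y * pd i g y := by
  simp only [pd, fderiv_fun_mul hf hg, add_apply, smul_apply, smul_eq_mul]
  ring

theorem pd_sum {ι : Type*} (i : Fin n) (t : Finset ι) {F : ι → (Fin n → ℝ) → ℝ}
    (hF : ∀ k ∈ t, DifferentiableAt ℝ (F k) y) :
    pd i (fun z => ∑ k ∈ t, F k z) y = ∑ k ∈ t, pd i (F k) y := by
  simp only [pd, fderiv_fun_sum hF, sum_apply]

theorem ContDiff.pd {m k : WithTop ℕ∞} (i : Fin n) (hf : ContDiff ℝ k f) (hmk : m + 1 ≤ k) :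
    ContDiff ℝ m (pd i f) :=
  (hf.fderiv_right hmk).clm_apply contDiff_const

end PartialDerivative

section NewCoordinates

variable {n : ℕ} {Φ Ψ : (Fin n → ℝ) → (Fin n → ℝ)} {f g h : (Fin n → ℝ) → ℝ}
  {y : Fin n → ℝ}

theorem Dhat_mul (s : Fin n) (hy : Ψ (Φ y) = y) (hf : DifferentiableAt ℝ (f ∘ Ψ) (Φ y))
    (hg : DifferentiableAt ℝ (g ∘ Ψ) (Φ y)) :
    Dhat Φ Ψ s (fun z => f z * g z) y = Dhat Φ Ψ s f y * g y + f y * Dhat Φ Ψ s g y := by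
  have h := pd_mul s hf hg
  simp only [Function.comp_apply, hy] at h
  exact h

theorem Dhat_sum {ι : Type*} (s : Fin n) (t : Finset ι) {F : ι → (Fin n → ℝ) → ℝ}
    (hF : ∀ k ∈ t, DifferentiableAt ℝ (F k ∘ Ψ) (Φ y)) :
    Dhat Φ Ψ s (fun z => ∑ k ∈ t, F k z) y = ∑ k ∈ t, Dhat Φ Ψ s (F k) y :=
  pd_sum s t hF

theorem comp_comp_of_leftInverse (hinv : Function.LeftInverse Ψ Φ) : (g ∘ Ψ) ∘ Φ = g :=
  funext fun z => congrArg g (hinv z)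

theorem differentiableAt_of_comp_leftInverse (hinv : Function.LeftInverse Ψ Φ)
    (hΦ : DifferentiableAt ℝ Φ y) (hg : DifferentiableAt ℝ (g ∘ Ψ) (Φ y)) :
    DifferentiableAt ℝ g y :=
  comp_comp_of_leftInverse (g := g) hinv ▸ hg.comp y hΦ

theorem pd_eq_sum_pd_mul_Dhat (i : Fin n) (hinv : Function.LeftInverse Ψ Φ)
    (hΦ : DifferentiableAt ℝ Φ y) (hg : DifferentiableAt ℝ (g ∘ Ψ) (Φ y)) :
    pd i g y = ∑ s, pd i (fun w => Φ w s) y * Dhat Φ Ψ s g y := by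
  calc pd i g y = fderiv ℝ (g ∘ Ψ) (Φ y) (fderiv ℝ Φ y (Pi.single i 1)) := by
        conv_lhs => rw [pd, ← comp_comp_of_leftInverse (g := g) hinv, fderiv_comp y hg hΦ]
        rfl
    _ = ∑ s, pd i (fun w => Φ w s) y * Dhat Φ Ψ s g y := by
        conv_lhs => rw [pi_eq_sum_univ' (fderiv ℝ Φ y (Pi.single i 1)), map_sum]
        simp [pd, Dhat, fderiv_apply hΦ]

theorem sum_pd_mul_eq_sum_Dhat_sub (hinv : Function.LeftInverse Ψ Φ)
    (hΦ : DifferentiableAt ℝ Φ y) {F : Fin n → (Fin n → ℝ) → ℝ}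
    (hF : ∀ i, DifferentiableAt ℝ (F i ∘ Ψ) (Φ y)) (hh : DifferentiableAt ℝ (h ∘ Ψ) (Φ y))
    (hp : ∀ i s, DifferentiableAt ℝ (pd i (fun w => Φ w s) ∘ Ψ) (Φ y)) :
    ∑ i, pd i (fun z => F i z * h z) y
      = ∑ s, Dhat Φ Ψ s (fun z => (∑ i, F i z * pd i (fun w => Φ w s) z) * h z) y
        - h y * ∑ i, ∑ s, F i y * Dhat Φ Ψ s (pd i (fun w => Φ w s)) y := by
  set p : Fin n → Fin n → (Fin n → ℝ) → ℝ := fun i s => pd i (fun w => Φ w s)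
  have hFp : ∀ i s, DifferentiableAt ℝ ((fun z => F i z * p i s z) ∘ Ψ) (Φ y) :=
    fun i s => (hF i).mul (hp i s)
  have lhs : ∀ i, pd i (fun z => F i z * h z) y
      = (∑ s, p i s y * Dhat Φ Ψ s (F i) y) * h y + F i y * ∑ s, p i s y * Dhat Φ Ψ s h y := by
    intro i
    rw [pd_mul i (differentiableAt_of_comp_leftInverse hinv hΦ (hF i))
      (differentiableAt_of_comp_leftInverse hinv hΦ hh), pd_eq_sum_pd_mul_Dhat i hinv hΦ (hF i),
      pd_eq_sum_pd_mul_Dhat i hinv hΦ hh]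
  have rhs : ∀ s, Dhat Φ Ψ s (fun z => (∑ i, F i z * p i s z) * h z) y
      = (∑ i, (Dhat Φ Ψ s (F i) y * p i s y + F i y * Dhat Φ Ψ s (p i s) y)) * h y
        + (∑ i, F i y * p i s y) * Dhat Φ Ψ s h y := by
    intro s
    have hsum : DifferentiableAt ℝ ((fun z => ∑ i, F i z * p i s z) ∘ Ψ) (Φ y) := by
      simpa only [Function.comp_def, Finset.sum_fn] using
        DifferentiableAt.sum fun i _ => hFp i s
    rw [Dhat_mul s (hinv y) hsum hh, Dhat_sum (F := fun i z => F i z * p i s z) s _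
      fun i _ => hFp i s]
    congr 2
    exact Finset.sum_congr rfl fun i _ => Dhat_mul s (hinv y) (hF i) (hp i s)
  rw [Finset.sum_congr rfl fun i _ => lhs i, Finset.sum_congr rfl fun s _ => rhs s]
  simp only [Finset.sum_mul, Finset.mul_sum, add_mul, Finset.sum_add_distrib]
  rw [Finset.sum_comm (f := fun s i => Dhat Φ Ψ s (F i) y * p i s y * h y),
    Finset.sum_comm (f := fun s i => F i y * Dhat Φ Ψ s (p i s) y * h y),
    Finset.sum_comm (f := fun s i => F i y * p i s y * Dhat Φ Ψ s h y)]
  simp only [← Finset.sum_add_distrib, ← Finset.sum_sub_distrib]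
  exact Finset.sum_congr rfl fun i _ => Finset.sum_congr rfl fun s _ => by ring

end NewCoordinates

theorem stmt17_general (n : ℕ)
    (Φ Ψ : (Fin n → ℝ) → (Fin n → ℝ))
    (hΦ : ContDiff ℝ 2 Φ) (hΨ : ContDiff ℝ 2 Ψ)
    (hinv₁ : Function.LeftInverse Ψ Φ)
    (F : Fin n → (Fin n → ℝ) → ℝ) (h : (Fin n → ℝ) → ℝ)
    (hF : ∀ i, ContDiff ℝ 1 (F i)) (hh : ContDiff ℝ 1 h) :
    ∀ y : Fin n → ℝ,
      (∑ i, pd i (fun z => F i z * h z) y)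
        = (∑ s, Dhat Φ Ψ s
              (fun z => (∑ i, F i z * pd i (fun w => Φ w s) z) * h z) y)
          - h y * ∑ i, ∑ s, F i y * Dhat Φ Ψ s (pd i (fun w => Φ w s)) y := by
  intro y
  have hΨ' : Differentiable ℝ Ψ := hΨ.differentiable (by norm_num)
  have hcomp : ∀ {g : (Fin n → ℝ) → ℝ}, ContDiff ℝ 1 g → DifferentiableAt ℝ (g ∘ Ψ) (Φ y) :=
    fun hg => ((hg.differentiable one_ne_zero).comp hΨ').differentiableAt
  exact sum_pd_mul_eq_sum_Dhat_sub hinv₁ (hΦ.differentiable (by norm_num) y)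
    (fun i => hcomp (hF i)) (hcomp hh)
    (fun i s => hcomp ((contDiff_pi.mp hΦ s).pd i (by norm_num)))

/-- change of variables for the first order terms:
`∑_i ∂_i(F_i h) = ∑_s D̂_s(F̂_s h) − h ∑_{i,s} F_i D̂_s(∂_i Φ_s)`, where
`F̂_s = ∑_i F_i ∂_i Φ_s`. -/
theorem stmt17 (n : ℕ) (hn : 1 ≤ n)
    (Φ Ψ : (Fin n → ℝ) → (Fin n → ℝ))
    (hbij : Function.Bijective Φ)
    (hΦ : ContDiff ℝ 2 Φ) (hΨ : ContDiff ℝ 2 Ψ)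
    (hinv₁ : Function.LeftInverse Ψ Φ) (hinv₂ : Function.RightInverse Ψ Φ)
    (F : Fin n → (Fin n → ℝ) → ℝ) (h : (Fin n → ℝ) → ℝ)
    (hF : ∀ i, ContDiff ℝ 1 (F i)) (hh : ContDiff ℝ 1 h) :
    ∀ y : Fin n → ℝ,
      (∑ i, pd i (fun z => F i z * h z) y)
        = (∑ s, Dhat Φ Ψ s
              (fun z => (∑ i, F i z * pd i (fun w => Φ w s) z) * h z) y)
          - h y * ∑ i, ∑ s, F i y * Dhat Φ Ψ s (pd i (fun w => Φ w s)) y :=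
  stmt17_general n Φ Ψ hΦ hΨ hinv₁ F h hF hh

end
end
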